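/- Let P be a convex d-polytope in E^d. Then for all sufficiently large k ∈ ℕ, the matrix A_k := [((1/deg(v)) Σ_{F facet containing v} (1 − q_F(w))^{2k})^{2k}]_{w,v ∈ vert(P)} is invertible, and there exist unique scalars y_{v,k} > 0 (v ∈ vert(P)), determined from A_k y_k = 𝟙, such that the polynomial f_k(x) := Σ_{v ∈ vert(P)} y_{v,k} ((1/deg(v)) Σ_{F facet containing v} (1 − q_F(x))^{2k})^{2k} satisfies f_k(w) = 1 for every vertex w of P. -/

import Mathlib

/-!
On the diagonal, `A_k(v, v) = 1` because every `q_F` with `v ∈ F` vanishes at `v`. Off the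
diagonal, for vertices `w ≠ v` some facet through `v` misses `w`: otherwise `w - v` would be
parallel to all facets through `v`, and `P` would contain a small segment through `v` in that
direction, contradicting extremality. That facet contributes a term `(1 - q_F(w))^{2k} → 0` to
the average defining `A_k(w, v)`, so the average is eventually at most some `b < 1` and
`A_k(w, v) → 0`. Hence for large `k` the off-diagonal row sums of `A_k` are below `1/2`. Such a
matrix is invertible (Gershgorin), and the solution of `A_k y = 𝟙` satisfies
`y = 𝟙 - (A_k - I) y`, which gives first `‖y‖_∞ ≤ 2` and then `y_v > 1 - (1/2) · 2 = 0`.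
Finally `f_k(w) = (A_k y)_w`.
-/

noncomputable section

open Metric Set Finset Matrix
open scoped RealInnerProductSpace BigOperators Classical

namespace AverkovHenk

abbrev E (d : ℕ) := EuclideanSpace ℝ (Fin d)

/-- Support function `h(P,u)` of `P` in direction `u`. -/
def supp {d : ℕ} (P : Set (E d)) (u : E d) : ℝ :=
  sSup ((fun x => ⟪u, x⟫) '' P)

/-- The normalized affine function `q_F` of the facet with outward unit normal `u`. -/
def qf {d : ℕ} (P : Set (E d)) (u : E d) (x : E d) : ℝ :=
  (supp P u - ⟪u, x⟫) / Metric.diam P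

/-- The exposed face of `P` in direction `u`. -/
def faceOf {d : ℕ} (P : Set (E d)) (u : E d) : Set (E d) :=
  {x ∈ P | ⟪u, x⟫ = supp P u}

/-- `u` is an outward unit normal of a facet (a `(d-1)`-dimensional face) of `P`. -/
def IsFacetNormal {d : ℕ} (P : Set (E d)) (u : E d) : Prop :=
  ‖u‖ = 1 ∧ Module.finrank ℝ ↥(vectorSpan ℝ (faceOf P u)) = d - 1

/-- The vertices of `P`, i.e. its extreme points. -/
def vertices {d : ℕ} (P : Set (E d)) : Set (E d) := Set.extremePoints ℝ P

/-- The `l`-th elementary symmetric function of `y_1, …, y_m`. -/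
def esymm {m : ℕ} (y : Fin m → ℝ) (l : ℕ) : ℝ :=
  ∑ J ∈ Finset.powersetCard l (Finset.univ : Finset (Fin m)), ∏ j ∈ J, y j

/-- A presentation of a convex `d`-polytope `P ⊆ E^d` by the `m` outward unit normals
`u 0, …, u (m-1)` of its facets, together with the induced representation
`P = {x | q_j(x) ≥ 0 for all j}`. -/
structure FacetRep (d m : ℕ) where
  P : Set (E d)
  u : Fin m → E d
  convex : Convex ℝ P
  compact : IsCompact P
  fulldim : (interior P).Nonempty
  inj : Function.Injective u
  facet : ∀ j, IsFacetNormal P (u j)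
  complete : ∀ w : E d, IsFacetNormal P w → ∃ j, w = u j
  rep : P = {x | ∀ j, 0 ≤ qf P (u j) x}

namespace FacetRep

variable {d m : ℕ}

/-- The vector `q(x) = (q_1(x), …, q_m(x))`. -/
def q (R : FacetRep d m) (x : E d) : Fin m → ℝ := fun j => qf R.P (R.u j) x

/-- The indices of the facets containing the point `v`. -/
def act (R : FacetRep d m) (v : E d) : Finset (Fin m) :=
  Finset.univ.filter fun j => R.q v j = 0

/-- The polytope is simple: each vertex lies on exactly `d` facets. -/
def Simple (R : FacetRep d m) : Prop :=
  ∀ v ∈ vertices R.P, (R.act v).card = d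

/-- The enlarged polytope `P_ε`. -/
def Peps (R : FacetRep d m) (ε : ℝ) : Set (E d) := {x | ∀ j, -ε ≤ R.q x j}

/-- The box `Π_{v,ε} = {x : |q_v(x)|_∞ ≤ ε}`. -/
def Piv (R : FacetRep d m) (v : E d) (ε : ℝ) : Set (E d) :=
  {x | ∀ j ∈ R.act v, |R.q x j| ≤ ε}

/-- The cone `C_v = {x : -σ_1(q_v(x)) ≥ (2/3)|q_v(x)|}` (Euclidean norm). -/
def Cv (R : FacetRep d m) (v : E d) : Set (E d) :=
  {x | (2/3) * Real.sqrt (∑ j ∈ R.act v, (R.q x j)^2) ≤ -(∑ j ∈ R.act v, R.q x j)}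

/-- The polytope `P^v_{ε,δ}`. -/
def Pv (R : FacetRep d m) (v : E d) (ε δ : ℝ) : Set (E d) :=
  {x | (∀ j ∈ R.act v, -ε ≤ R.q x j) ∧ ∀ j ∉ R.act v, δ ≤ R.q x j}

/-- `γ = max{1 - q_F(v) : F a facet, v a vertex not on F}`. -/
def gam (R : FacetRep d m) : ℝ :=
  sSup {c | ∃ v ∈ vertices R.P, ∃ j, R.q v j ≠ 0 ∧ c = 1 - R.q v j}

/-- The polynomial `f_k` built from weights `y_v` over the vertex set `V`. -/
def fk (R : FacetRep d m) (V : Finset (E d)) (y : ↥V → ℝ) (k : ℕ) (x : E d) : ℝ :=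
  ∑ v : ↥V, y v * ((∑ j ∈ R.act v.1, (1 - R.q x j)^(2*k)) / (R.act v.1).card)^(2*k)

/-- The matrix `A_k` indexed by the vertex set `V`. -/
def Ak (R : FacetRep d m) (V : Finset (E d)) (k : ℕ) : Matrix ↥V ↥V ℝ :=
  Matrix.of fun w v : ↥V => ((∑ j ∈ R.act v.1, (1 - R.q w.1 j)^(2*k)) / (R.act v.1).card)^(2*k)

/-- `deg(P)`: the maximal number of facets through a vertex. -/
def degP (R : FacetRep d m) (V : Finset (E d)) : ℕ := V.sup fun v => (R.act v).card

end FacetRep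

/-- `|U_s^{-1}|_2` where `U_s` is the matrix with rows `u_j^T`, `j ∈ s`: the supremum of `‖x‖`
over the set where the Euclidean norm of `U_s x` is at most `1`. -/
def invNormU {d m : ℕ} (u : Fin m → E d) (s : Finset (Fin m)) : ℝ :=
  sSup {c | ∃ x : E d, Real.sqrt (∑ j ∈ s, (⟪u j, x⟫)^2) ≤ 1 ∧ c = ‖x‖}

/-- `α = max_{v ∈ vert(P)} |U_v^{-1}|_2`. -/
def alpha {d m : ℕ} (R : FacetRep d m) (V : Finset (E d)) : ℝ :=
  sSup {a | ∃ v ∈ V, a = invNormU R.u (R.act v)}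

/-- The normal cone `N(Q,x) = {u : ⟨x,u⟩ = h(Q,u)}`. -/
def normalCone {d : ℕ} (Q : Set (E d)) (x : E d) : Set (E d) :=
  {u | ⟪u, x⟫ = supp Q u}

/-- `S` is an edge (a 1-dimensional face) of `P`. -/
def IsEdgeOf {d : ℕ} (P S : Set (E d)) : Prop :=
  IsExposed ℝ P S ∧ Module.finrank ℝ ↥(vectorSpan ℝ S) = 1

end AverkovHenk

open Filter Topology

lemma abs_sum_mul_le_sum_norm_mul_norm {ι : Type*} [Fintype ι] (s : Finset ι) (a y : ι → ℝ) :
    |∑ j ∈ s, a j * y j| ≤ (∑ j ∈ s, ‖a j‖) * ‖y‖ := by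
  rw [sum_mul]
  refine (abs_sum_le_sum_abs _ _).trans (sum_le_sum fun j _ => ?_)
  rw [abs_mul, ← Real.norm_eq_abs, ← Real.norm_eq_abs]
  exact mul_le_mul_of_nonneg_left (norm_le_pi_norm y j) (norm_nonneg _)

namespace Matrix

variable {I : Type*} [Fintype I] [DecidableEq I] {A : Matrix I I ℝ}

lemma eq_one_sub_sum_erase_of_mulVec_eq_one (hdiag : ∀ i, A i i = 1) {y : I → ℝ}
    (hy : A *ᵥ y = 1) (i : I) : y i = 1 - ∑ j ∈ univ.erase i, A i j * y j := by
  have hrow : ∑ j, A i j * y j = 1 := congrFun hy i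
  rw [← add_sum_erase _ _ (mem_univ i), hdiag, one_mul] at hrow
  linarith

lemma norm_le_two_of_mulVec_eq_one (hdiag : ∀ i, A i i = 1)
    (hrow : ∀ i, ∑ j ∈ univ.erase i, ‖A i j‖ < 1 / 2) {y : I → ℝ} (hy : A *ᵥ y = 1) :
    ‖y‖ ≤ 2 := by
  suffices ‖y‖ ≤ 1 + ‖y‖ / 2 by linarith
  refine (pi_norm_le_iff_of_nonneg (by positivity)).2 fun i => ?_
  have h := abs_sum_mul_le_sum_norm_mul_norm (univ.erase i) (A i) y
  have := mul_le_mul_of_nonneg_right (hrow i).le (norm_nonneg y)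
  rw [Real.norm_eq_abs, eq_one_sub_sum_erase_of_mulVec_eq_one hdiag hy i]
  linarith [abs_sub (1 : ℝ) (∑ j ∈ univ.erase i, A i j * y j), abs_one (α := ℝ)]

lemma pos_of_mulVec_eq_one (hdiag : ∀ i, A i i = 1)
    (hrow : ∀ i, ∑ j ∈ univ.erase i, ‖A i j‖ < 1 / 2) {y : I → ℝ} (hy : A *ᵥ y = 1) (i : I) :
    0 < y i := by
  have h := abs_sum_mul_le_sum_norm_mul_norm (univ.erase i) (A i) y
  have := mul_le_mul_of_nonneg_left (norm_le_two_of_mulVec_eq_one hdiag hrow hy)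
    (sum_nonneg fun j (_ : j ∈ univ.erase i) => norm_nonneg (A i j))
  rw [eq_one_sub_sum_erase_of_mulVec_eq_one hdiag hy i]
  linarith [le_abs_self (∑ j ∈ univ.erase i, A i j * y j), hrow i]

lemma existsUnique_pos_mulVec_eq_one (hdiag : ∀ i, A i i = 1)
    (hrow : ∀ i, ∑ j ∈ univ.erase i, ‖A i j‖ < 1 / 2) :
    A.det ≠ 0 ∧ ∃! y : I → ℝ, (∀ i, 0 < y i) ∧ A *ᵥ y = 1 := by
  have hdet : A.det ≠ 0 := det_ne_zero_of_sum_row_lt_diag fun i => by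
    rw [hdiag, norm_one]; linarith [hrow i]
  have hA : IsUnit A := (isUnit_iff_isUnit_det A).2 (isUnit_iff_ne_zero.2 hdet)
  have hsol : A *ᵥ (A⁻¹ *ᵥ 1) = 1 := by
    rw [mulVec_mulVec, mul_nonsing_inv _ ((isUnit_iff_isUnit_det A).1 hA), one_mulVec]
  refine ⟨hdet, A⁻¹ *ᵥ 1, ⟨pos_of_mulVec_eq_one hdiag hrow hsol, hsol⟩, fun z hz => ?_⟩
  exact mulVec_injective_iff_isUnit.2 hA (hz.2.trans hsol.symm)

end Matrix

lemma tendsto_sum_pow_div_card_pow_atTop_nhds_zero {ι : Type*} {s : Finset ι} {a : ι → ℝ}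
    (h0 : ∀ j ∈ s, 0 ≤ a j) (h1 : ∀ j ∈ s, a j ≤ 1) {j₀ : ι} (hj₀ : j₀ ∈ s) (hlt : a j₀ < 1) :
    Tendsto (fun k : ℕ => ((∑ j ∈ s, a j ^ k) / #s) ^ k) atTop (𝓝 0) := by
  have hc : (0 : ℝ) < #s := by exact_mod_cast card_pos.2 ⟨j₀, hj₀⟩
  set b : ℝ := 1 - 1 / (2 * #s)
  have hb : b < 1 := by simp only [b]; linarith [show 0 < 1 / (2 * (#s : ℝ)) by positivity]
  have hb0 : 0 ≤ b := by
    have : (1 : ℝ) ≤ #s := by exact_mod_cast card_pos.2 ⟨j₀, hj₀⟩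
    rw [sub_nonneg, div_le_one (by positivity)]
    linarith
  have havg0 : ∀ k, 0 ≤ (∑ j ∈ s, a j ^ k) / #s := fun k =>
    div_nonneg (sum_nonneg fun j hj => pow_nonneg (h0 j hj) k) hc.le
  -- once `a j₀ ^ k ≤ 1/2`, the average drops below `b = 1 - 1/(2 #s)`
  have havg : ∀ᶠ k in atTop, (∑ j ∈ s, a j ^ k) / #s ≤ b := by
    filter_upwards [(tendsto_pow_atTop_nhds_zero_of_lt_one (h0 j₀ hj₀) hlt).eventually
      (eventually_le_nhds one_half_pos)] with k hk
    have hrest : ∑ j ∈ s.erase j₀, a j ^ k ≤ #s - 1 := by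
      have := sum_le_card_nsmul (s.erase j₀) (fun j => a j ^ k) 1 fun j hj =>
        pow_le_one₀ (h0 j (mem_of_mem_erase hj)) (h1 j (mem_of_mem_erase hj))
      rwa [card_erase_of_mem hj₀, nsmul_one, Nat.cast_sub (card_pos.2 ⟨j₀, hj₀⟩),
        Nat.cast_one] at this
    rw [div_le_iff₀ hc, ← add_sum_erase _ _ hj₀]
    have : b * #s = #s - 1 / 2 := by simp only [b]; field_simp
    linarith
  refine squeeze_zero' (Eventually.of_forall fun k => pow_nonneg (havg0 k) k) ?_
    (tendsto_pow_atTop_nhds_zero_of_lt_one hb0 hb)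
  filter_upwards [havg] with k hk using pow_le_pow_left₀ (havg0 k) hk k

namespace AverkovHenk

namespace FacetRep

variable {d m : ℕ} (R : FacetRep d m)

lemma mem_iff_forall_q_nonneg {x : E d} : x ∈ R.P ↔ ∀ j, 0 ≤ R.q x j := by
  rw [R.rep]
  rfl

lemma q_nonneg {x : E d} (hx : x ∈ R.P) (j : Fin m) : 0 ≤ R.q x j :=
  R.mem_iff_forall_q_nonneg.1 hx j

lemma q_le_one {x : E d} (hx : x ∈ R.P) (j : Fin m) : R.q x j ≤ 1 := by
  refine div_le_one_of_le₀ (sub_le_iff_le_add.2 <| csSup_le (⟨_, x, hx, rfl⟩) ?_) diam_nonneg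
  rintro _ ⟨y, hy, rfl⟩
  have hCS : ⟪R.u j, y - x⟫ ≤ dist y x := by
    simpa [(R.facet j).1, dist_eq_norm] using real_inner_le_norm (R.u j) (y - x)
  have := dist_le_diam_of_mem R.compact.isBounded hy hx
  rw [inner_sub_right] at hCS
  linarith

lemma q_add_smul (x y : E d) (t : ℝ) (j : Fin m) :
    R.q (x + t • y) j = R.q x j - t * (⟪R.u j, y⟫ / diam R.P) := by
  simp only [FacetRep.q, qf, inner_add_right, real_inner_smul_right]
  ring

lemma eventually_add_smul_mem {x y : E d} (hx : x ∈ R.P)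
    (hy : ∀ j ∈ R.act x, ⟪R.u j, y⟫ = 0) : ∀ᶠ t in 𝓝 (0 : ℝ), x + t • y ∈ R.P := by
  simp only [R.mem_iff_forall_q_nonneg, q_add_smul]
  refine eventually_all.2 fun j => ?_
  by_cases hj : j ∈ R.act x
  · simp [hy j hj, (Finset.mem_filter.1 hj).2]
  · have hpos : 0 < R.q x j := (R.q_nonneg hx j).lt_of_ne' fun h => hj (by simp [act, h])
    have hcont : Continuous fun t : ℝ => R.q x j - t * (⟪R.u j, y⟫ / diam R.P) := by fun_prop
    exact (hcont.tendsto' 0 _ (by simp) |>.eventually (eventually_gt_nhds hpos)).mono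
      fun _ h => h.le

lemma eq_zero_of_mem_vertices {v y : E d} (hv : v ∈ vertices R.P)
    (hy : ∀ j ∈ R.act v, ⟪R.u j, y⟫ = 0) : y = 0 := by
  obtain ⟨ε, hε, hball⟩ := Metric.eventually_nhds_iff.1 (R.eventually_add_smul_mem hv.1 hy)
  have hmem : ∀ t : ℝ, |t| < ε → v + t • y ∈ R.P := fun t ht =>
    hball (show dist t 0 < ε by simpa using ht)
  have hε2 : |ε / 2| < ε := by rw [abs_of_pos (half_pos hε)]; linarith
  have hseg : v ∈ openSegment ℝ (v + (-(ε / 2)) • y) (v + (ε / 2) • y) :=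
    ⟨1 / 2, 1 / 2, one_half_pos, one_half_pos, add_halves 1, by module⟩
  have := (mem_extremePoints.1 hv).2 _ (hmem _ (by rwa [abs_neg])) _ (hmem _ hε2) hseg
  simpa [hε.ne'] using this.2

lemma act_nonempty (hd : 0 < d) {v : E d} (hv : v ∈ vertices R.P) : (R.act v).Nonempty := by
  have : Nonempty (Fin d) := ⟨⟨0, hd⟩⟩
  obtain ⟨y, hy⟩ := exists_ne (0 : E d)
  by_contra h
  exact hy (R.eq_zero_of_mem_vertices hv fun j hj => absurd ⟨j, hj⟩ h)

lemma exists_mem_act_pos {v w : E d} (hv : v ∈ vertices R.P) (hw : w ∈ R.P) (hwv : w ≠ v) :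
    ∃ j ∈ R.act v, 0 < R.q w j := by
  by_contra! h
  have hdiam : 0 < diam R.P :=
    (dist_pos.2 hwv).trans_le (dist_le_diam_of_mem R.compact.isBounded hw hv.1)
  refine hwv (sub_eq_zero.1 (R.eq_zero_of_mem_vertices hv fun j hj => ?_))
  have hqw : R.q w j = 0 := (h j hj).antisymm (R.q_nonneg hw j)
  have hqv : R.q v j = 0 := (Finset.mem_filter.1 hj).2
  have := R.q_add_smul v (w - v) 1 j
  rw [one_smul, add_sub_cancel, hqw, hqv, one_mul, zero_sub, zero_eq_neg,
    div_eq_zero_iff] at this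
  exact this.resolve_right hdiam.ne'

variable (V : Finset (E d))

lemma Ak_apply_self (k : ℕ) (v : ↥V) (hv : (R.act v).Nonempty) : R.Ak V k v v = 1 := by
  have hq : ∀ j ∈ R.act v, (1 - R.q v j) ^ (2 * k) = 1 := fun j hj => by
    rw [(Finset.mem_filter.1 hj).2, sub_zero, one_pow]
  simp only [Ak, Matrix.of_apply, Finset.sum_congr rfl hq, Finset.sum_const, nsmul_one,
    div_self (Nat.cast_ne_zero.2 hv.card_pos.ne' : ((R.act v).card : ℝ) ≠ 0), one_pow]

lemma tendsto_Ak_apply {w v : ↥V} (hw : (w : E d) ∈ R.P) (hv : (v : E d) ∈ vertices R.P)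
    (hwv : w ≠ v) : Tendsto (fun k => R.Ak V k w v) atTop (𝓝 0) := by
  obtain ⟨j₀, hj₀, hpos⟩ := R.exists_mem_act_pos hv hw (Subtype.coe_injective.ne hwv)
  have h := tendsto_sum_pow_div_card_pow_atTop_nhds_zero
    (fun j _ => sub_nonneg.2 (R.q_le_one hw j)) (fun j _ => sub_le_self _ (R.q_nonneg hw j))
    hj₀ (sub_lt_self 1 hpos)
  exact h.comp (tendsto_id.const_mul_atTop' two_pos)

lemma fk_eq_mulVec (y : ↥V → ℝ) (k : ℕ) (w : ↥V) : R.fk V y k w = (R.Ak V k *ᵥ y) w := by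
  simp only [fk, Ak, Matrix.mulVec, dotProduct, Matrix.of_apply, mul_comm]

end FacetRep

theorem statement7 (d m : ℕ) (hd : 2 ≤ d) (R : FacetRep d m)
    (V : Finset (E d)) (hV : (↑V : Set (E d)) = vertices R.P) :
    ∃ k₀ : ℕ, ∀ k ≥ k₀, (R.Ak V k).det ≠ 0 ∧
      ∃! y : ↥V → ℝ, (∀ v, 0 < y v) ∧ R.Ak V k *ᵥ y = 1 ∧
        ∀ w : ↥V, R.fk V y k w.1 = 1 := by
  have hvert (v : ↥V) : (v : E d) ∈ vertices R.P := hV ▸ v.2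
  have hrow (w : ↥V) : ∀ᶠ k in atTop, ∑ v ∈ univ.erase w, ‖R.Ak V k w v‖ < 1 / 2 := by
    have h := tendsto_finsetSum (univ.erase w) fun v hv =>
      (R.tendsto_Ak_apply V (hvert w).1 (hvert v) (Finset.ne_of_mem_erase hv).symm).norm
    simp only [norm_zero, sum_const_zero] at h
    exact h.eventually_lt_const one_half_pos
  obtain ⟨k₀, hk₀⟩ := eventually_atTop.1 (eventually_all.2 hrow)
  refine ⟨k₀, fun k hk => ?_⟩
  obtain ⟨hdet, y, ⟨hpos, hy⟩, huniq⟩ := Matrix.existsUnique_pos_mulVec_eq_one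
    (fun v => R.Ak_apply_self V k v (R.act_nonempty (by omega) (hvert v))) (hk₀ k hk)
  exact ⟨hdet, y, ⟨hpos, hy, fun w => by rw [R.fk_eq_mulVec, hy]; rfl⟩,
    fun z hz => huniq z ⟨hz.1, hz.2.1⟩⟩

end AverkovHenk
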